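/- arXiv:1205.7010 — 2 statements merged into one kernel-verified Lean document; each statement's English description precedes it below -/
import Mathlib

section
/- A linear map u : H_4 → H_4 is a unitary coalgebra map (a coalgebra morphism with u(1) = 1) if and only if either u is the trivial morphism u(h) = ε(h)1 for all h ∈ H_4, or there exist scalars α, β, γ, δ ∈ k such that u(1) = 1, u(g) = g, u(x) = α - αg + βx, and u(gx) = γ - γg + δgx. -/
open TensorProduct

noncomputable section

/-- A linear map between coalgebras is a coalgebra morphism if it commutes with
counits and comultiplications. -/
def IsCoalgebraMap (k : Type*) [CommRing k] {A B : Type*} [AddCommGroup A] [Module k A]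
    [Coalgebra k A] [AddCommGroup B] [Module k B] [Coalgebra k B] (u : A →ₗ[k] B) : Prop :=
  Coalgebra.counit (R := k) ∘ₗ u = Coalgebra.counit (R := k) ∧
    Coalgebra.comul (R := k) ∘ₗ u = TensorProduct.map u u ∘ₗ Coalgebra.comul (R := k)

/-- `H` is (a model of) Sweedler's 4-dimensional Hopf algebra `H₄` with generators `g`, `x`:
`g² = 1`, `x² = 0`, `xg = -gx`, the family `{1, g, x, gx}` is a basis of `H`, `g` is
group-like, `x` is `(1, g)`-primitive, and `S(g) = g`, `S(x) = -gx`. -/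
structure IsSweedler (k : Type*) [CommRing k] (H : Type*) [Ring H] [HopfAlgebra k H]
    (g x : H) : Prop where
  g_sq : g * g = 1
  x_sq : x * x = 0
  x_mul_g : x * g = -(g * x)
  li : LinearIndependent k ![(1 : H), g, x, g * x]
  span : Submodule.span k {(1 : H), g, x, g * x} = ⊤
  comul_g : Coalgebra.comul (R := k) g = g ⊗ₜ[k] g
  comul_x : Coalgebra.comul (R := k) x = x ⊗ₜ[k] (1 : H) + g ⊗ₜ[k] x
  counit_g : Coalgebra.counit (R := k) g = 1
  counit_x : Coalgebra.counit (R := k) x = 0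
  antipode_g : HopfAlgebra.antipode (R := k) g = g
  antipode_x : HopfAlgebra.antipode (R := k) x = -(g * x)

/-!
A unitary coalgebra map sends group-like elements to group-like elements and
`(a, b)`-skew-primitive elements (`Δ y = y ⊗ a + b ⊗ y`) to `(u a, u b)`-skew-primitive ones.
Comparing coefficients in the basis `eᵢ ⊗ eⱼ` of `H₄ ⊗ H₄` shows that the group-likes of `H₄`
are `1` and `g`, that the only `(1, 1)`-primitive is `0`, and that the `(1, g)`- and
`(g, 1)`-primitives are the combinations of `1 - g` with `x` and with `gx` respectively.
Since `Δ x = x ⊗ 1 + g ⊗ x` and `Δ (gx) = gx ⊗ g + 1 ⊗ gx`, either `u g = 1` and then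
`u x = u (gx) = 0`, i.e. `u = ε(-) 1`, or `u g = g` and `u x`, `u (gx)` have the stated form.
Conversely, it suffices to check the coalgebra-map identities on the basis.
-/

section Coalgebra

variable {k : Type*} [CommRing k] {A B : Type*} [AddCommGroup A] [Module k A] [Coalgebra k A]
  [AddCommGroup B] [Module k B] [Coalgebra k B]

theorem isCoalgebraMap_iff_of_span_eq_top {s : Set A} (hs : Submodule.span k s = ⊤)
    (u : A →ₗ[k] B) :
    IsCoalgebraMap k u ↔ ∀ a ∈ s, Coalgebra.counit (R := k) (u a) = Coalgebra.counit a ∧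
      Coalgebra.comul (R := k) (u a) = TensorProduct.map u u (Coalgebra.comul a) := by
  refine ⟨fun ⟨hε, hΔ⟩ a _ => ⟨LinearMap.congr_fun hε a, LinearMap.congr_fun hΔ a⟩,
    fun h => ⟨LinearMap.ext_on hs fun a ha => (h a ha).1,
      LinearMap.ext_on hs fun a ha => (h a ha).2⟩⟩

theorem Coalgebra.counit_eq_zero_of_comul_eq_tmul_add_tmul {a b y : A}
    (ha : Coalgebra.counit (R := k) a = 1) (hb : Coalgebra.counit (R := k) b = 1)
    (hy : Coalgebra.comul (R := k) y = y ⊗ₜ a + b ⊗ₜ y) :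
    Coalgebra.counit (R := k) y = 0 := by
  have h : Coalgebra.counit (R := k) y ⊗ₜ[k] a = 0 := by
    have h := Coalgebra.rTensor_counit_comul (R := k) y
    rwa [hy, map_add, LinearMap.rTensor_tmul, LinearMap.rTensor_tmul, hb, add_eq_right] at h
  simpa [ha] using congrArg (fun t => Coalgebra.counit (R := k) (TensorProduct.lid k A t)) h

end Coalgebra

namespace IsSweedler

variable {k : Type*} [CommRing k] {H : Type*} [Ring H] [HopfAlgebra k H] {g x : H}
  (hs : IsSweedler k H g x)
include hs

def basis : Module.Basis (Fin 4) k H :=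
  .mk hs.li (by
    rw [← hs.span]
    exact Submodule.span_mono (by simp [Set.insert_subset_iff]))

@[simp] theorem basis_zero : hs.basis 0 = 1 := by simp [basis]
@[simp] theorem basis_one : hs.basis 1 = g := by simp [basis]
@[simp] theorem basis_two : hs.basis 2 = x := by simp [basis]
@[simp] theorem basis_three : hs.basis 3 = g * x := by simp [basis]

theorem repr_one : hs.basis.repr 1 = Finsupp.single 0 1 := by
  simpa using hs.basis.repr_self 0
theorem repr_g : hs.basis.repr g = Finsupp.single 1 1 := by
  simpa using hs.basis.repr_self 1
theorem repr_x : hs.basis.repr x = Finsupp.single 2 1 := by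
  simpa using hs.basis.repr_self 2
theorem repr_gx : hs.basis.repr (g * x) = Finsupp.single 3 1 := by
  simpa using hs.basis.repr_self 3

theorem eq_repr_smul_add (y : H) :
    y = hs.basis.repr y 0 • 1 + hs.basis.repr y 1 • g + hs.basis.repr y 2 • x +
      hs.basis.repr y 3 • (g * x) := by
  have h := hs.basis.sum_repr y
  rw [Fin.sum_univ_four, basis_zero, basis_one, basis_two, basis_three] at h
  exact h.symm

theorem comul_gx : Coalgebra.comul (R := k) (g * x) = (g * x) ⊗ₜ g + 1 ⊗ₜ (g * x) := by
  rw [Bialgebra.comul_mul, hs.comul_g, hs.comul_x, mul_add, Algebra.TensorProduct.tmul_mul_tmul,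
    Algebra.TensorProduct.tmul_mul_tmul, mul_one, hs.g_sq]

theorem counit_gx : Coalgebra.counit (R := k) (g * x) = 0 := by
  rw [Bialgebra.counit_mul, hs.counit_x, mul_zero]

theorem counit_eq_repr_add (y : H) :
    Coalgebra.counit (R := k) y = hs.basis.repr y 0 + hs.basis.repr y 1 := by
  conv_lhs => rw [hs.eq_repr_smul_add y]
  simp [hs.counit_g, hs.counit_x, hs.counit_gx]

/-- Entry `(i, j)` is the coefficient of `e i ⊗ e j` in `Δ y`, where `e = (1, g, x, gx)`. -/
theorem tensorProduct_repr_comul (y : H) (i j : Fin 4) :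
    (hs.basis.tensorProduct hs.basis).repr (Coalgebra.comul (R := k) y) (i, j) =
      let c := hs.basis.repr y
      !![c 0, 0, 0, c 3; 0, c 1, c 2, 0; c 2, 0, 0, 0; 0, c 3, 0, 0] i j := by
  conv_lhs => rw [hs.eq_repr_smul_add y]
  simp only [map_add, map_smul, Bialgebra.comul_one, Algebra.TensorProduct.one_def, hs.comul_g,
    hs.comul_x, hs.comul_gx, Finsupp.add_apply, Finsupp.smul_apply,
    Module.Basis.tensorProduct_repr_tmul_apply, hs.repr_one, hs.repr_g, hs.repr_x, hs.repr_gx]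
  fin_cases i <;> fin_cases j <;> simp

theorem isGroupLikeElem_iff [NoZeroDivisors k] {y : H} : IsGroupLikeElem k y ↔ y = 1 ∨ y = g := by
  refine ⟨fun ⟨hε, hΔ⟩ => ?_, ?_⟩
  · have coeff (i j : Fin 4) := hs.tensorProduct_repr_comul y i j
    simp only [hΔ, Module.Basis.tensorProduct_repr_tmul_apply, smul_eq_mul] at coeff
    rw [hs.counit_eq_repr_add] at hε
    have hy := hs.eq_repr_smul_add y
    set c := hs.basis.repr y
    have h01 : c 1 * c 0 = 0 := by simpa using coeff 0 1
    have h2 : c 2 = 0 := by simpa using coeff 2 2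
    have h3 : c 3 = 0 := by simpa using coeff 3 3
    rcases mul_eq_zero.1 h01 with h1 | h0
    · left
      rw [hy, h1, h2, h3, show c 0 = 1 by linear_combination hε - h1]
      simp
    · right
      rw [hy, h0, h2, h3, show c 1 = 1 by linear_combination hε - h0]
      simp
  · rintro (rfl | rfl)
    · exact .one
    · exact ⟨hs.counit_g, hs.comul_g⟩

theorem comul_eq_tmul_one_add_one_tmul_iff {y : H} :
    Coalgebra.comul (R := k) y = y ⊗ₜ 1 + 1 ⊗ₜ y ↔ y = 0 := by
  refine ⟨fun hΔ => ?_, fun hy => by simp [hy]⟩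
  have coeff (i j : Fin 4) := hs.tensorProduct_repr_comul y i j
  simp only [hΔ, map_add, Finsupp.add_apply, Module.Basis.tensorProduct_repr_tmul_apply,
    hs.repr_one, Finsupp.single_apply, smul_eq_mul] at coeff
  have hy := hs.eq_repr_smul_add y
  set c := hs.basis.repr y
  have h0 : c 0 = 0 := by simpa using coeff 0 0
  have h1 : c 1 = 0 := by simpa [eq_comm] using coeff 1 1
  have h2 : c 2 = 0 := by simpa [eq_comm] using coeff 1 2
  have h3 : c 3 = 0 := by simpa [eq_comm] using coeff 3 1
  rw [hy, h0, h1, h2, h3]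
  simp

theorem comul_eq_tmul_one_add_g_tmul_iff {y : H} :
    Coalgebra.comul (R := k) y = y ⊗ₜ 1 + g ⊗ₜ y ↔ ∃ α β : k, y = α • 1 - α • g + β • x := by
  constructor
  · intro hΔ
    have coeff (i j : Fin 4) := hs.tensorProduct_repr_comul y i j
    simp only [hΔ, map_add, Finsupp.add_apply, Module.Basis.tensorProduct_repr_tmul_apply,
      hs.repr_one, hs.repr_g, Finsupp.single_apply, smul_eq_mul] at coeff
    have hy := hs.eq_repr_smul_add y
    set c := hs.basis.repr y
    have h1 : c 1 + c 0 = 0 := by simpa using coeff 1 0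
    have h3 : c 3 = 0 := by simpa using coeff 3 0
    refine ⟨c 0, c 2, ?_⟩
    rw [hy, h3, show c 1 = -c 0 by linear_combination h1]
    module
  · rintro ⟨α, β, rfl⟩
    simp only [map_add, map_sub, map_smul, Bialgebra.comul_one, Algebra.TensorProduct.one_def,
      hs.comul_g, hs.comul_x, TensorProduct.add_tmul, TensorProduct.sub_tmul,
      TensorProduct.tmul_add, TensorProduct.tmul_sub, ← TensorProduct.smul_tmul',
      TensorProduct.tmul_smul]
    module

theorem comul_eq_tmul_g_add_one_tmul_iff {y : H} :
    Coalgebra.comul (R := k) y = y ⊗ₜ g + 1 ⊗ₜ y ↔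
      ∃ γ δ : k, y = γ • 1 - γ • g + δ • (g * x) := by
  constructor
  · intro hΔ
    have coeff (i j : Fin 4) := hs.tensorProduct_repr_comul y i j
    simp only [hΔ, map_add, Finsupp.add_apply, Module.Basis.tensorProduct_repr_tmul_apply,
      hs.repr_one, hs.repr_g, Finsupp.single_apply, smul_eq_mul] at coeff
    have hy := hs.eq_repr_smul_add y
    set c := hs.basis.repr y
    have h1 : c 0 + c 1 = 0 := by simpa using coeff 0 1
    have h2 : c 2 = 0 := by simpa using coeff 2 1
    refine ⟨c 0, c 3, ?_⟩
    rw [hy, h2, show c 1 = -c 0 by linear_combination h1]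
    module
  · rintro ⟨γ, δ, rfl⟩
    simp only [map_add, map_sub, map_smul, Bialgebra.comul_one, Algebra.TensorProduct.one_def,
      hs.comul_g, hs.comul_gx, TensorProduct.add_tmul, TensorProduct.sub_tmul,
      TensorProduct.tmul_add, TensorProduct.tmul_sub, ← TensorProduct.smul_tmul',
      TensorProduct.tmul_smul]
    module

theorem isCoalgebraMap_iff {u : H →ₗ[k] H} (h1 : u 1 = 1) :
    IsCoalgebraMap k u ↔ IsGroupLikeElem k (u g) ∧
      Coalgebra.comul (R := k) (u x) = u x ⊗ₜ 1 + u g ⊗ₜ u x ∧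
      Coalgebra.comul (R := k) (u (g * x)) = u (g * x) ⊗ₜ u g + 1 ⊗ₜ u (g * x) := by
  rw [isCoalgebraMap_iff_of_span_eq_top hs.span]
  simp only [Set.forall_mem_insert, Set.mem_singleton_iff, forall_eq, h1, Bialgebra.comul_one,
    Algebra.TensorProduct.one_def, hs.comul_g, hs.comul_x, hs.comul_gx, map_add,
    TensorProduct.map_tmul, Bialgebra.counit_one, hs.counit_g, hs.counit_x, hs.counit_gx,
    and_self]
  refine ⟨fun ⟨_, hg, ⟨_, hx⟩, _, hgx⟩ => ⟨⟨hg.1, hg.2⟩, hx, hgx⟩,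
    fun ⟨hg, hx, hgx⟩ => ⟨trivial, ⟨hg.1, hg.2⟩, ⟨?_, hx⟩, ?_, hgx⟩⟩
  · exact Coalgebra.counit_eq_zero_of_comul_eq_tmul_add_tmul Bialgebra.counit_one hg.1 hx
  · exact Coalgebra.counit_eq_zero_of_comul_eq_tmul_add_tmul hg.1 Bialgebra.counit_one hgx

theorem forall_eq_counit_smul_one_iff {u : H →ₗ[k] H} :
    (∀ h, u h = Coalgebra.counit (R := k) h • (1 : H)) ↔
      u 1 = 1 ∧ u g = 1 ∧ u x = 0 ∧ u (g * x) = 0 := by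
  refine ⟨fun hu => ?_, fun ⟨h1, hg, hx, hgx⟩ h => ?_⟩
  · simp [hu, hs.counit_g, hs.counit_x, hs.counit_gx]
  · show u h = (LinearMap.toSpanSingleton k H 1 ∘ₗ Coalgebra.counit) h
    congr 1
    refine LinearMap.ext_on hs.span ?_
    simp only [Set.EqOn, Set.forall_mem_insert, Set.mem_singleton_iff, forall_eq]
    simp [h1, hg, hx, hgx, hs.counit_g, hs.counit_x, hs.counit_gx]

end IsSweedler

theorem sweedler_unitary_coalgebra_maps_general
    {k : Type*} [Field k] {H : Type*} [Ring H] [HopfAlgebra k H]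
    {g x : H} (hs : IsSweedler k H g x) (u : H →ₗ[k] H) :
    (IsCoalgebraMap k u ∧ u 1 = 1) ↔
      ((∀ h : H, u h = Coalgebra.counit (R := k) h • (1 : H)) ∨
        ∃ α β γ δ : k, u 1 = 1 ∧ u g = g ∧
          u x = α • (1 : H) - α • g + β • x ∧
          u (g * x) = γ • (1 : H) - γ • g + δ • (g * x)) := by
  constructor
  · rintro ⟨hu, h1⟩
    obtain ⟨hg, hx, hgx⟩ := (hs.isCoalgebraMap_iff h1).1 hu
    rcases hs.isGroupLikeElem_iff.1 hg with hg | hg <;> rw [hg] at hx hgx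
    · exact .inl <| hs.forall_eq_counit_smul_one_iff.2 ⟨h1, hg,
        hs.comul_eq_tmul_one_add_one_tmul_iff.1 hx,
        hs.comul_eq_tmul_one_add_one_tmul_iff.1 (by rw [hgx, add_comm])⟩
    · obtain ⟨α, β, hα⟩ := hs.comul_eq_tmul_one_add_g_tmul_iff.1 hx
      obtain ⟨γ, δ, hγ⟩ := hs.comul_eq_tmul_g_add_one_tmul_iff.1 hgx
      exact .inr ⟨α, β, γ, δ, h1, hg, hα, hγ⟩
  · rintro (htriv | ⟨α, β, γ, δ, h1, hg, hα, hγ⟩)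
    · obtain ⟨h1, hg, hx, hgx⟩ := hs.forall_eq_counit_smul_one_iff.1 htriv
      refine ⟨(hs.isCoalgebraMap_iff h1).2 ?_, h1⟩
      rw [hg, hx, hgx]
      exact ⟨.one, by simp, by simp⟩
    · refine ⟨(hs.isCoalgebraMap_iff h1).2 ?_, h1⟩
      rw [hg]
      exact ⟨⟨hs.counit_g, hs.comul_g⟩, hs.comul_eq_tmul_one_add_g_tmul_iff.2 ⟨α, β, hα⟩,
        hs.comul_eq_tmul_g_add_one_tmul_iff.2 ⟨γ, δ, hγ⟩⟩

/-- A linear map `u : H₄ → H₄` is a unitary coalgebra map (a coalgebra morphism with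
`u(1) = 1`) if and only if either `u` is the trivial morphism `u(h) = ε(h)1`, or there
exist scalars `α, β, γ, δ ∈ k` such that `u(1) = 1`, `u(g) = g`, `u(x) = α - αg + βx`
and `u(gx) = γ - γg + δgx`. -/
theorem sweedler_unitary_coalgebra_maps
    {k : Type*} [Field k] (hchar : (2 : k) ≠ 0) {H : Type*} [Ring H] [HopfAlgebra k H]
    {g x : H} (hs : IsSweedler k H g x) (u : H →ₗ[k] H) :
    (IsCoalgebraMap k u ∧ u 1 = 1) ↔
      ((∀ h : H, u h = Coalgebra.counit (R := k) h • (1 : H)) ∨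
        ∃ α β γ δ : k, u 1 = 1 ∧ u g = g ∧
          u x = α • (1 : H) - α • g + β • x ∧
          u (g * x) = γ • (1 : H) - γ • g + δ • (g * x)) :=
  sweedler_unitary_coalgebra_maps_general hs u

end
end

section
/- Let k be a field of characteristic ≠ 2. For every λ ∈ k^* (i.e. λ ≠ 0), the Hopf algebras H_{16,λ} and H_{16,1} are isomorphic; an isomorphism is obtained by sending X to λ^{-1}X and fixing g, x, G. -/
open TensorProduct

noncomputable section

/-- `E` is (a model of) the Hopf algebra `𝓗_{16, λ}`: it is generated by `g`, `x`, `G`, `X`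
subject to the relations `g² = G² = 1`, `x² = X² = 0`, `gx = -xg`, `GX = -XG`, `gG = Gg`,
`gX = -Xg`, `xG = -Gx`, `xX + Xx = λ(1 - Gg)`, the sixteen products of elements of
`{1, G, X, GX}` with elements of `{1, g, x, gx}` form a basis of `E`, the elements
`g`, `G` are group-like, `x` is `(1, g)`-primitive and `X` is `(1, G)`-primitive. -/
structure IsH16 (k : Type*) [CommRing k] (E : Type*) [Ring E] [HopfAlgebra k E]
    (g x G X : E) (lam : k) : Prop where
  g_sq : g * g = 1
  G_sq : G * G = 1
  x_sq : x * x = 0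
  X_sq : X * X = 0
  gx_eq : g * x = -(x * g)
  GX_eq : G * X = -(X * G)
  gG_comm : g * G = G * g
  gX_anticomm : g * X = -(X * g)
  xG_anticomm : x * G = -(G * x)
  xX_rel : x * X + X * x = lam • ((1 : E) - G * g)
  li : LinearIndependent k
    (fun p : Fin 4 × Fin 4 => ![(1 : E), G, X, G * X] p.1 * ![(1 : E), g, x, g * x] p.2)
  span : Submodule.span k
    (Set.range (fun p : Fin 4 × Fin 4 =>
      ![(1 : E), G, X, G * X] p.1 * ![(1 : E), g, x, g * x] p.2)) = ⊤
  comul_g : Coalgebra.comul (R := k) g = g ⊗ₜ[k] g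
  comul_G : Coalgebra.comul (R := k) G = G ⊗ₜ[k] G
  comul_x : Coalgebra.comul (R := k) x = x ⊗ₜ[k] (1 : E) + g ⊗ₜ[k] x
  comul_X : Coalgebra.comul (R := k) X = X ⊗ₜ[k] (1 : E) + G ⊗ₜ[k] X
  counit_g : Coalgebra.counit (R := k) g = 1
  counit_G : Coalgebra.counit (R := k) G = 1
  counit_x : Coalgebra.counit (R := k) x = 0
  counit_X : Coalgebra.counit (R := k) X = 0

/-! Rescaling `X` by `λ⁻¹` turns the relation `xX + Xx = λ(1 - Gg)` into the one with `λ = 1`,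
so it suffices that two models with the same `λ` are isomorphic. The linear isomorphism matching
the monomial bases commutes with left multiplication by each generator (both sides reduce to
normal form by the same rewriting rules), hence is multiplicative because the generators generate.
Comultiplication and counit are algebra maps, so compatibility with them is checked on the
generators. -/

theorem LinearMap.map_mul_of_adjoin_eq_top {R A B : Type*} [CommSemiring R] [Semiring A]
    [Semiring B] [Algebra R A] [Algebra R B] (f : A →ₗ[R] B) {s : Set A}
    (hs : Algebra.adjoin R s = ⊤) (h_one : f 1 = 1)
    (h_mul : ∀ a ∈ s, ∀ b, f (a * b) = f a * f b) (a b : A) :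
    f (a * b) = f a * f b := by
  have ha : a ∈ Algebra.adjoin R s := hs ▸ Algebra.mem_top
  induction ha using Algebra.adjoin_induction generalizing b with
  | mem a ha => exact h_mul a ha b
  | algebraMap r => simp [Algebra.algebraMap_eq_smul_one, h_one]
  | add a c _ _ iha ihc => simp [add_mul, iha, ihc]
  | mul a c _ _ iha ihc => rw [mul_assoc, iha, ihc, iha, mul_assoc]

namespace IsH16

variable {k : Type*} [CommRing k] {E : Type*} [Ring E] [HopfAlgebra k E]
  {g x G X : E} {lam : k}

def basis (h : IsH16 k E g x G X lam) : Module.Basis (Fin 4 × Fin 4) k E :=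
  .mk h.li h.span.ge

theorem basis_apply (h : IsH16 k E g x G X lam) (p : Fin 4 × Fin 4) :
    h.basis p = ![(1 : E), G, X, G * X] p.1 * ![(1 : E), g, x, g * x] p.2 :=
  Module.Basis.mk_apply _ _ _

theorem adjoin_eq_top (h : IsH16 k E g x G X lam) : Algebra.adjoin k {g, x, G, X} = ⊤ := by
  rw [← Algebra.toSubmodule_eq_top, eq_top_iff, ← h.basis.span_eq, Submodule.span_le]
  rintro _ ⟨⟨i, j⟩, rfl⟩
  have mem {y : E} (hy : y ∈ ({g, x, G, X} : Set E)) : y ∈ Algebra.adjoin k {g, x, G, X} :=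
    Algebra.subset_adjoin hy
  refine h.basis_apply (i, j) ▸ Subalgebra.mul_mem _ ?_ ?_
  · fin_cases i <;> simp [Subalgebra.mul_mem, mem]
  · fin_cases j <;> simp [Subalgebra.mul_mem, mem]

theorem smul_X (h : IsH16 k E g x G X lam) (c : kˣ) :
    IsH16 k E g x G ((c : k) • X) (c * lam) := by
  let b := h.basis.unitsSMul (fun p : Fin 4 × Fin 4 => ![1, 1, c, c] p.1)
  have hb : ⇑b = fun p : Fin 4 × Fin 4 =>
      ![(1 : E), G, (c : k) • X, G * ((c : k) • X)] p.1 * ![(1 : E), g, x, g * x] p.2 := by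
    ext ⟨i, j⟩
    fin_cases i <;> simp [b, Module.Basis.unitsSMul_apply, basis_apply, Units.smul_def]
  refine
    { h with
      X_sq := by rw [smul_mul_smul_comm, h.X_sq, smul_zero]
      GX_eq := by rw [mul_smul_comm, smul_mul_assoc, h.GX_eq, smul_neg]
      gX_anticomm := by rw [mul_smul_comm, smul_mul_assoc, h.gX_anticomm, smul_neg]
      xX_rel := by rw [mul_smul_comm, smul_mul_assoc, ← smul_add, h.xX_rel, smul_smul]
      li := hb ▸ b.linearIndependent
      span := hb ▸ b.span_eq
      comul_X := by rw [map_smul, h.comul_X, smul_add, smul_tmul', ← tmul_smul]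
      counit_X := by rw [map_smul, h.counit_X, smul_zero] }

/- Rewriting rules bringing right-associated words in `g, x, G, X` to the normal form
`G^a X^b g^c x^d` of the monomial basis. -/
section Rewriting

variable (h : IsH16 k E g x G X lam)
include h

theorem g_mul_g_mul (y : E) : g * (g * y) = y := by rw [← mul_assoc, h.g_sq, one_mul]
theorem G_mul_G_mul (y : E) : G * (G * y) = y := by rw [← mul_assoc, h.G_sq, one_mul]
theorem X_mul_X_mul (y : E) : X * (X * y) = 0 := by rw [← mul_assoc, h.X_sq, zero_mul]
theorem x_mul_g : x * g = -(g * x) := by rw [h.gx_eq, neg_neg]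
theorem X_mul_G : X * G = -(G * X) := by rw [h.GX_eq, neg_neg]
theorem x_mul_X : x * X = lam • (1 - G * g) - X * x := eq_sub_of_add_eq h.xX_rel

theorem x_mul_g_mul (y : E) : x * (g * y) = -(g * (x * y)) := by
  rw [← mul_assoc, h.x_mul_g, neg_mul, mul_assoc]
theorem X_mul_G_mul (y : E) : X * (G * y) = -(G * (X * y)) := by
  rw [← mul_assoc, h.X_mul_G, neg_mul, mul_assoc]
theorem g_mul_G_mul (y : E) : g * (G * y) = G * (g * y) := by
  rw [← mul_assoc, h.gG_comm, mul_assoc]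
theorem g_mul_X_mul (y : E) : g * (X * y) = -(X * (g * y)) := by
  rw [← mul_assoc, h.gX_anticomm, neg_mul, mul_assoc]
theorem x_mul_G_mul (y : E) : x * (G * y) = -(G * (x * y)) := by
  rw [← mul_assoc, h.xG_anticomm, neg_mul, mul_assoc]
theorem x_mul_X_mul (y : E) : x * (X * y) = lam • (y - G * (g * y)) - X * (x * y) := by
  rw [← mul_assoc, h.x_mul_X, sub_mul, smul_mul_assoc, sub_mul, one_mul, mul_assoc, mul_assoc]

end Rewriting

section Uniqueness

variable {F : Type*} [Ring F] [HopfAlgebra k F] {g₁ x₁ G₁ X₁ : F}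
  (hF : IsH16 k F g₁ x₁ G₁ X₁ lam) (hE : IsH16 k E g x G X lam)

def linearEquiv : F ≃ₗ[k] E := hF.basis.equiv hE.basis (Equiv.refl _)

theorem linearEquiv_monomial (i j : Fin 4) :
    linearEquiv hF hE (![(1 : F), G₁, X₁, G₁ * X₁] i * ![(1 : F), g₁, x₁, g₁ * x₁] j) =
      ![(1 : E), G, X, G * X] i * ![(1 : E), g, x, g * x] j := by
  rw [← hF.basis_apply (i, j), ← hE.basis_apply (i, j), linearEquiv,
    Module.Basis.equiv_apply, Equiv.refl_apply]

theorem linearEquiv_mul_generator :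
    ∀ s ∈ ({g₁, x₁, G₁, X₁} : Set F), ∀ b,
      linearEquiv hF hE (s * b) = linearEquiv hF hE s * linearEquiv hF hE b := by
  have hmono := linearEquiv_monomial hF hE
  simp only [Fin.forall_fin_succ, IsEmpty.forall_iff, Matrix.cons_val_zero, Matrix.cons_val_succ,
    and_true, mul_one, one_mul, mul_assoc] at hmono
  intro s hs b
  suffices (linearEquiv hF hE).toLinearMap ∘ₗ LinearMap.mulLeft k s =
      LinearMap.mulLeft k (linearEquiv hF hE s) ∘ₗ (linearEquiv hF hE).toLinearMap from
    LinearMap.congr_fun this b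
  refine hF.basis.ext fun ⟨i, j⟩ => ?_
  rcases hs with rfl | rfl | rfl | rfl <;> fin_cases i <;> fin_cases j <;>
    simp [basis_apply, hmono, mul_assoc, mul_add, mul_sub, smul_sub,
      hF.g_sq, hF.G_sq, hF.x_sq, hF.X_sq, hF.x_mul_g, hF.X_mul_G, hF.gG_comm, hF.gX_anticomm,
      hF.xG_anticomm, hF.x_mul_X, hF.g_mul_g_mul, hF.G_mul_G_mul, hF.X_mul_X_mul, hF.x_mul_g_mul,
      hF.X_mul_G_mul, hF.g_mul_G_mul, hF.g_mul_X_mul, hF.x_mul_G_mul, hF.x_mul_X_mul,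
      hE.g_sq, hE.G_sq, hE.x_sq, hE.X_sq, hE.x_mul_g, hE.X_mul_G, hE.gG_comm, hE.gX_anticomm,
      hE.xG_anticomm, hE.x_mul_X, hE.g_mul_g_mul, hE.G_mul_G_mul, hE.X_mul_X_mul, hE.x_mul_g_mul,
      hE.X_mul_G_mul, hE.g_mul_G_mul, hE.g_mul_X_mul, hE.x_mul_G_mul, hE.x_mul_X_mul]

def algEquiv : F ≃ₐ[k] E :=
  .ofLinearEquiv (linearEquiv hF hE) (by simpa using linearEquiv_monomial hF hE 0 0)
    ((linearEquiv hF hE).toLinearMap.map_mul_of_adjoin_eq_top hF.adjoin_eq_top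
      (by simpa using linearEquiv_monomial hF hE 0 0) (linearEquiv_mul_generator hF hE))

@[simp] theorem algEquiv_g : algEquiv hF hE g₁ = g := by
  simpa [algEquiv] using linearEquiv_monomial hF hE 0 1
@[simp] theorem algEquiv_x : algEquiv hF hE x₁ = x := by
  simpa [algEquiv] using linearEquiv_monomial hF hE 0 2
@[simp] theorem algEquiv_G : algEquiv hF hE G₁ = G := by
  simpa [algEquiv] using linearEquiv_monomial hF hE 1 0
@[simp] theorem algEquiv_X : algEquiv hF hE X₁ = X := by
  simpa [algEquiv] using linearEquiv_monomial hF hE 2 0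

def bialgEquiv : F ≃ₐc[k] E :=
  .ofAlgEquiv (algEquiv hF hE)
    (AlgHom.ext_of_adjoin_eq_top hF.adjoin_eq_top <| by
      rintro _ (rfl | rfl | rfl | rfl) <;>
        simp [hF.counit_g, hF.counit_x, hF.counit_G, hF.counit_X, hE.counit_g, hE.counit_x,
          hE.counit_G, hE.counit_X])
    (AlgHom.ext_of_adjoin_eq_top hF.adjoin_eq_top <| by
      rintro _ (rfl | rfl | rfl | rfl) <;>
        simp [hF.comul_g, hF.comul_x, hF.comul_G, hF.comul_X, hE.comul_g, hE.comul_x,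
          hE.comul_G, hE.comul_X])

end Uniqueness

end IsH16

theorem h16_iso_of_ne_zero_general
    {k : Type*} [Field k] {lam : k} (hlam : lam ≠ 0)
    {E : Type*} [Ring E] [HopfAlgebra k E] {g x G X : E}
    (hE : IsH16 k E g x G X lam)
    {F : Type*} [Ring F] [HopfAlgebra k F] {g₁ x₁ G₁ X₁ : F}
    (hF : IsH16 k F g₁ x₁ G₁ X₁ 1) :
    ∃ ψ : F ≃ₐc[k] E,
      ψ g₁ = g ∧ ψ x₁ = x ∧ ψ G₁ = G ∧ ψ X₁ = lam⁻¹ • X := by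
  have hE₁ : IsH16 k E g x G (lam⁻¹ • X) 1 := by
    simpa [inv_mul_cancel₀ hlam] using hE.smul_X (Units.mk0 lam⁻¹ (inv_ne_zero hlam))
  exact ⟨hF.bialgEquiv hE₁, hF.algEquiv_g hE₁, hF.algEquiv_x hE₁, hF.algEquiv_G hE₁,
    hF.algEquiv_X hE₁⟩

/-- For every `λ ∈ kˣ` (char `k ≠ 2`), the Hopf algebras `𝓗_{16, λ}` and `𝓗_{16, 1}` are
isomorphic; an isomorphism is obtained by sending `X` to `λ⁻¹ X` and fixing `g, x, G`. -/
theorem h16_iso_of_ne_zero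
    {k : Type*} [Field k] (hchar : (2 : k) ≠ 0) {lam : k} (hlam : lam ≠ 0)
    {E : Type*} [Ring E] [HopfAlgebra k E] {g x G X : E}
    (hE : IsH16 k E g x G X lam)
    {F : Type*} [Ring F] [HopfAlgebra k F] {g₁ x₁ G₁ X₁ : F}
    (hF : IsH16 k F g₁ x₁ G₁ X₁ 1) :
    ∃ ψ : F ≃ₐc[k] E,
      ψ g₁ = g ∧ ψ x₁ = x ∧ ψ G₁ = G ∧ ψ X₁ = lam⁻¹ • X :=
  h16_iso_of_ne_zero_general hlam hE hF

end
end
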